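/- Let H be a C²(ℝⁿ∖{0}) norm with λ|η|² ≤ (1/2)∇²(H²)(ξ)η·η ≤ Λ|η|² for ξ≠0, and a : (0,∞)→(0,∞) a C¹ function with −1 < i_a ≤ s_a < ∞ (where i_a = inf ta'/a, s_a = sup ta'/a). Define 𝒜(ξ) = a(H(ξ))·(1/2)∇(H²)(ξ) for ξ ≠ 0. Then for all ξ ≠ 0 and η ∈ ℝⁿ: λ·min{1, 1+i_a}·a(H(ξ))·|η|² ≤ (∇𝒜(ξ)η)·η ≤ Λ·max{1, 1+s_a}·a(H(ξ))·|η|². -/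

import Mathlib

/-!
Writing `p = ∇H(ξ)·η` and `S = ∇²H(ξ)η·η`, the product rule gives
`½∇²(H²)(ξ)η·η = p² + H(ξ) S` and
`∇𝒜(ξ)η·η = a(H(ξ)) (½∇²(H²)(ξ)η·η + r p²)` with `r = H(ξ) a'(H(ξ)) / a(H(ξ)) ∈ [i_a, s_a]`.
A norm is convex, so `S ≥ 0` and `0 ≤ p² ≤ ½∇²(H²)(ξ)η·η`; the term `r p²` therefore moves the
quadratic form by a factor between `min 1 (1 + r)` and `max 1 (1 + r)`, and the ellipticity of
`½∇²(H²)` finishes the proof.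
-/

open scoped RealInnerProductSpace
open Filter Set Metric Topology

section
variable {E : Type*} [NormedAddCommGroup E] [NormedSpace ℝ E]

theorem fderiv_sq_eq {H : E → ℝ} {x : E} (hH : DifferentiableAt ℝ H x) :
    fderiv ℝ (fun y => H y ^ 2) x = (2 * H x) • fderiv ℝ H x := by
  simp [fderiv_fun_pow 2 hH]

theorem fderiv_fderiv_sq_apply {H : E → ℝ} {x : E} (hH : ContDiffAt ℝ 2 H x) (v w : E) :
    fderiv ℝ (fderiv ℝ fun y => H y ^ 2) x v w =
      2 * (fderiv ℝ H x v * fderiv ℝ H x w + H x * fderiv ℝ (fderiv ℝ H) x v w) := by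
  have hdiff : ∀ᶠ y in 𝓝 x, DifferentiableAt ℝ H y :=
    (hH.eventually (by simp)).mono fun y hy => hy.differentiableAt (by norm_num)
  have hD : fderiv ℝ (fun y => H y ^ 2) =ᶠ[𝓝 x] fun y => (2 * H y) • fderiv ℝ H y :=
    hdiff.mono fun y hy => fderiv_sq_eq hy
  have hH1 : DifferentiableAt ℝ H x := hH.differentiableAt (by norm_num)
  have hF : DifferentiableAt ℝ (fderiv ℝ H) x :=
    (hH.fderiv_right (m := 1) (by norm_num)).differentiableAt one_ne_zero
  rw [hD.fderiv_eq, fderiv_fun_smul (hH1.const_mul 2) hF, fderiv_const_mul hH1]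
  simp only [add_apply, smul_apply, ContinuousLinearMap.smulRight_apply, smul_eq_mul]
  ring

theorem ConvexOn.fderiv_fderiv_apply_self_nonneg {f : E → ℝ} {s : Set E} {x : E}
    (hf : ConvexOn ℝ s f) (hs : s ∈ 𝓝 x) (hf2 : ContDiffAt ℝ 2 f x) (v : E) :
    0 ≤ fderiv ℝ (fderiv ℝ f) x v v := by
  obtain ⟨ε, hε, hball⟩ : ∃ ε > 0, ball x ε ⊆ s ∩ {y | DifferentiableAt ℝ f y} :=
    mem_nhds_iff.1 <| inter_mem hs <|
      (hf2.eventually (by simp)).mono fun y hy => hy.differentiableAt (by norm_num)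
  let line : ℝ →ᵃ[ℝ] E := AffineMap.lineMap x (x + v)
  have hline : ∀ t : ℝ, line t = x + t • v := fun t => by
    simp [line, AffineMap.lineMap_apply, add_comm]
  have hl : ∀ t, HasDerivAt line v t := fun t => by
    rw [show ⇑line = fun t => x + t • v from funext hline]
    simpa using ((hasDerivAt_id t).smul_const v).const_add x
  set U := line ⁻¹' ball x ε
  have hU : U ∈ 𝓝 0 :=
    (isOpen_ball.preimage AffineMap.lineMap_continuous).mem_nhds (by simp [hε])
  have hderiv : ∀ t ∈ U, HasDerivAt (f ∘ line) (fderiv ℝ f (line t) v) t := fun t ht =>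
    (hball ht).2.hasFDerivAt.comp_hasDerivAt t (hl t)
  have hmono : MonotoneOn (fun t => fderiv ℝ f (line t) v) U :=
    (((hf.comp_affineMap line).subset (preimage_mono (hball.trans inter_subset_left))
      ((convex_ball x ε).affine_preimage line)).monotoneOn_deriv
        fun t ht => (hderiv t ht).differentiableAt).congr fun t ht => (hderiv t ht).deriv
  have hsecond :
      HasDerivAt (fun t => fderiv ℝ f (line t) v) (fderiv ℝ (fderiv ℝ f) x v v) 0 := by
    have hF : DifferentiableAt ℝ (fderiv ℝ f) (line 0) := by
      simpa [hline] using (hf2.fderiv_right (m := 1) (by norm_num)).differentiableAt one_ne_zero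
    simpa [hline] using
      (hF.hasFDerivAt.comp_hasDerivAt 0 (hl 0)).clm_apply (hasDerivAt_const 0 v)
  exact hsecond.hasDerivWithinAt.nonneg_of_monotoneOn
    (accPt_iff_frequently_nhdsNE.2 (Eventually.frequently (mem_nhdsWithin_of_mem_nhds hU))) hmono

end

section
variable {E : Type*} [NormedAddCommGroup E] [InnerProductSpace ℝ E] [CompleteSpace E]

theorem inner_fderiv_gradient_apply (f : E → ℝ) (x v w : E) :
    ⟪fderiv ℝ (gradient f) x v, w⟫ = fderiv ℝ (fderiv ℝ f) x v w := by
  rw [show gradient f = (InnerProductSpace.toDual ℝ E).symm ∘ fderiv ℝ f from rfl,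
    LinearIsometryEquiv.comp_fderiv]
  exact InnerProductSpace.toDual_symm_apply

theorem inner_fderiv_smul_half_gradient_sq {a : ℝ → ℝ} {H : E → ℝ} {𝒜 : E → E} {ξ : E}
    (hH : ContDiffAt ℝ 2 H ξ) (ha : DifferentiableAt ℝ a (H ξ))
    (h𝒜 : 𝒜 =ᶠ[𝓝 ξ] fun x => a (H x) • ((1 / 2 : ℝ) • gradient (fun x => H x ^ 2) x))
    (η : E) :
    ⟪fderiv ℝ 𝒜 ξ η, η⟫ =
      a (H ξ) * (fderiv ℝ H ξ η ^ 2 + H ξ * fderiv ℝ (fderiv ℝ H) ξ η η) +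
        H ξ * deriv a (H ξ) * fderiv ℝ H ξ η ^ 2 := by
  have hH1 : DifferentiableAt ℝ H ξ := hH.differentiableAt (by norm_num)
  have hG : DifferentiableAt ℝ (gradient fun x => H x ^ 2) ξ :=
    (InnerProductSpace.toDual ℝ E).symm.comp_differentiableAt_iff.2 <|
      ((hH.pow 2).fderiv_right (m := 1) (by norm_num)).differentiableAt one_ne_zero
  have ha' : HasFDerivAt (fun x => a (H x)) (deriv a (H ξ) • fderiv ℝ H ξ) ξ :=
    ha.hasDerivAt.comp_hasFDerivAt ξ hH1.hasFDerivAt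
  have hG' : DifferentiableAt ℝ (fun x => (1 / 2 : ℝ) • gradient (fun x => H x ^ 2) x) ξ :=
    hG.const_smul _
  rw [h𝒜.fderiv_eq, fderiv_fun_smul ha'.differentiableAt hG', ha'.fderiv,
    fderiv_fun_const_smul hG]
  simp only [add_apply, smul_apply, ContinuousLinearMap.smulRight_apply, inner_add_left,
    real_inner_smul_left, inner_fderiv_gradient_apply, fderiv_fderiv_sq_apply hH,
    inner_gradient_left, fderiv_sq_eq hH1]
  ring

end

theorem min_one_one_add_mul_le {P Q r : ℝ} (hP : 0 ≤ P) (hPQ : P ≤ Q) :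
    min 1 (1 + r) * Q ≤ Q + r * P := by
  rcases le_total 0 r with hr | hr
  · nlinarith [min_le_left 1 (1 + r), mul_nonneg hr hP]
  · nlinarith [min_le_right 1 (1 + r), mul_le_mul_of_nonpos_left hPQ hr]

theorem le_max_one_one_add_mul {P Q r : ℝ} (hP : 0 ≤ P) (hPQ : P ≤ Q) :
    Q + r * P ≤ max 1 (1 + r) * Q := by
  rcases le_total 0 r with hr | hr
  · nlinarith [le_max_right 1 (1 + r), mul_le_mul_of_nonneg_left hPQ hr]
  · nlinarith [le_max_left 1 (1 + r), mul_nonpos_of_nonpos_of_nonneg hr hP]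

theorem mul_add_mul_bounds {lam Lam ia sa r α N P Q : ℝ} (hα : 0 < α) (hia : -1 < ia)
    (hir : ia ≤ r) (hrs : r ≤ sa) (hP : 0 ≤ P) (hPQ : P ≤ Q) (hlo : lam * N ≤ Q)
    (hhi : Q ≤ Lam * N) :
    lam * min 1 (1 + ia) * α * N ≤ α * (Q + r * P) ∧
      α * (Q + r * P) ≤ Lam * max 1 (1 + sa) * α * N := by
  have hmin : 0 ≤ min 1 (1 + ia) := le_min zero_le_one (by linarith)
  constructor
  · calc lam * min 1 (1 + ia) * α * N
        = α * (min 1 (1 + ia) * (lam * N)) := by ring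
      _ ≤ α * (min 1 (1 + ia) * Q) := by gcongr
      _ ≤ α * (min 1 (1 + r) * Q) := by
        gcongr
        exact hP.trans hPQ
      _ ≤ α * (Q + r * P) := by
        gcongr
        exact min_one_one_add_mul_le hP hPQ
  · calc α * (Q + r * P)
        ≤ α * (max 1 (1 + r) * Q) := by
          gcongr
          exact le_max_one_one_add_mul hP hPQ
      _ ≤ α * (max 1 (1 + sa) * (Lam * N)) := by
        gcongr
        exact hP.trans hPQ
      _ = Lam * max 1 (1 + sa) * α * N := by ring

theorem stmt15_general {n : ℕ} (H : EuclideanSpace ℝ (Fin n) → ℝ)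
    (hzero : ∀ x, H x = 0 ↔ x = 0)
    (htri : ∀ x y, H (x + y) ≤ H x + H y)
    (hhom : ∀ (c : ℝ) (x : EuclideanSpace ℝ (Fin n)), H (c • x) = |c| * H x)
    (hC2 : ContDiffOn ℝ 2 H {(0 : EuclideanSpace ℝ (Fin n))}ᶜ)
    (lam Lam : ℝ)
    (hell : ∀ ξ : EuclideanSpace ℝ (Fin n), ξ ≠ 0 → ∀ η : EuclideanSpace ℝ (Fin n),
      lam * ‖η‖ ^ 2 ≤ (1 / 2) * iteratedFDeriv ℝ 2 (fun x => (H x) ^ 2) ξ ![η, η] ∧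
      (1 / 2) * iteratedFDeriv ℝ 2 (fun x => (H x) ^ 2) ξ ![η, η] ≤ Lam * ‖η‖ ^ 2)
    (a : ℝ → ℝ) (ia sa : ℝ)
    (ha : ∀ t > (0 : ℝ), 0 < a t)
    (hadiff : ∀ t > (0 : ℝ), DifferentiableAt ℝ a t)
    (hia : -1 < ia)
    (hlow : ∀ t > (0 : ℝ), ia ≤ t * deriv a t / a t)
    (hhigh : ∀ t > (0 : ℝ), t * deriv a t / a t ≤ sa)
    (𝒜 : EuclideanSpace ℝ (Fin n) → EuclideanSpace ℝ (Fin n))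
    (h𝒜 : ∀ ξ : EuclideanSpace ℝ (Fin n), ξ ≠ 0 →
      𝒜 ξ = a (H ξ) • ((1 / 2 : ℝ) • gradient (fun x => (H x) ^ 2) ξ)) :
    ∀ ξ : EuclideanSpace ℝ (Fin n), ξ ≠ 0 → ∀ η : EuclideanSpace ℝ (Fin n),
      lam * min 1 (1 + ia) * a (H ξ) * ‖η‖ ^ 2 ≤ ⟪fderiv ℝ 𝒜 ξ η, η⟫ ∧
      ⟪fderiv ℝ 𝒜 ξ η, η⟫ ≤ Lam * max 1 (1 + sa) * a (H ξ) * ‖η‖ ^ 2 := by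
  intro ξ hξ η
  let N : Seminorm ℝ (EuclideanSpace ℝ (Fin n)) :=
    Seminorm.of H htri fun c x => by rw [hhom, Real.norm_eq_abs]
  have hHξ : 0 < H ξ := (apply_nonneg N ξ).lt_of_ne' ((hzero ξ).not.2 hξ)
  have hH : ContDiffAt ℝ 2 H ξ := hC2.contDiffAt (isOpen_compl_singleton.mem_nhds hξ)
  set p := fderiv ℝ H ξ η
  set Q := p ^ 2 + H ξ * fderiv ℝ (fderiv ℝ H) ξ η η
  have hpQ : p ^ 2 ≤ Q := le_add_of_nonneg_right <|
    mul_nonneg hHξ.le (N.convexOn.fderiv_fderiv_apply_self_nonneg univ_mem hH η)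
  have hQ : (1 / 2) * iteratedFDeriv ℝ 2 (fun x => H x ^ 2) ξ ![η, η] = Q := by
    rw [iteratedFDeriv_two_apply, fderiv_fderiv_sq_apply hH]
    simp only [Matrix.cons_val_zero, Matrix.cons_val_one]
    ring
  set r := H ξ * deriv a (H ξ) / a (H ξ)
  have hJ : ⟪fderiv ℝ 𝒜 ξ η, η⟫ = a (H ξ) * (Q + r * p ^ 2) := by
    rw [inner_fderiv_smul_half_gradient_sq hH (hadiff _ hHξ)
      (eventually_of_mem (isOpen_compl_singleton.mem_nhds hξ) h𝒜)]
    simp only [Q, p, r]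
    field_simp [(ha _ hHξ).ne']
  obtain ⟨hlo, hhi⟩ := hell ξ hξ η
  rw [hQ] at hlo hhi
  rw [hJ]
  exact mul_add_mul_bounds (ha _ hHξ) hia (hlow _ hHξ) (hhigh _ hHξ) (sq_nonneg p) hpQ hlo hhi

/-- Ellipticity bounds for the Jacobian of `𝒜(ξ) = a(H(ξ))·½∇(H²)(ξ)`:
`λ·min{1,1+i_a}·a(H(ξ))|η|² ≤ ∇𝒜(ξ)η·η ≤ Λ·max{1,1+s_a}·a(H(ξ))|η|²` for `ξ ≠ 0`. -/
theorem stmt15 {n : ℕ} (H : EuclideanSpace ℝ (Fin n) → ℝ)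
    (hpos : ∀ x, 0 ≤ H x)
    (hzero : ∀ x, H x = 0 ↔ x = 0)
    (htri : ∀ x y, H (x + y) ≤ H x + H y)
    (hhom : ∀ (c : ℝ) (x : EuclideanSpace ℝ (Fin n)), H (c • x) = |c| * H x)
    (hC2 : ContDiffOn ℝ 2 H {(0 : EuclideanSpace ℝ (Fin n))}ᶜ)
    (lam Lam : ℝ) (hlam : 0 < lam) (hlL : lam ≤ Lam)
    (hell : ∀ ξ : EuclideanSpace ℝ (Fin n), ξ ≠ 0 → ∀ η : EuclideanSpace ℝ (Fin n),
      lam * ‖η‖ ^ 2 ≤ (1 / 2) * iteratedFDeriv ℝ 2 (fun x => (H x) ^ 2) ξ ![η, η] ∧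
      (1 / 2) * iteratedFDeriv ℝ 2 (fun x => (H x) ^ 2) ξ ![η, η] ≤ Lam * ‖η‖ ^ 2)
    (a : ℝ → ℝ) (ia sa : ℝ)
    (ha : ∀ t > (0 : ℝ), 0 < a t)
    (hadiff : ∀ t > (0 : ℝ), DifferentiableAt ℝ a t)
    (hia : -1 < ia) (hiasa : ia ≤ sa)
    (hlow : ∀ t > (0 : ℝ), ia ≤ t * deriv a t / a t)
    (hhigh : ∀ t > (0 : ℝ), t * deriv a t / a t ≤ sa)
    (𝒜 : EuclideanSpace ℝ (Fin n) → EuclideanSpace ℝ (Fin n))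
    (h𝒜 : ∀ ξ : EuclideanSpace ℝ (Fin n), ξ ≠ 0 →
      𝒜 ξ = a (H ξ) • ((1 / 2 : ℝ) • gradient (fun x => (H x) ^ 2) ξ)) :
    ∀ ξ : EuclideanSpace ℝ (Fin n), ξ ≠ 0 → ∀ η : EuclideanSpace ℝ (Fin n),
      lam * min 1 (1 + ia) * a (H ξ) * ‖η‖ ^ 2 ≤ ⟪fderiv ℝ 𝒜 ξ η, η⟫ ∧
      ⟪fderiv ℝ 𝒜 ξ η, η⟫ ≤ Lam * max 1 (1 + sa) * a (H ξ) * ‖η‖ ^ 2 :=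
  stmt15_general H hzero htri hhom hC2 lam Lam hell a ia sa ha hadiff hia hlow hhigh 𝒜 h𝒜
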